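/- Let σ be a positional strategy for player T in the justification game graph G_JF, I an interpretation, and x a defined fact. Then val(J_σ(x), x, I) equals the greatest lower bound, over all general strategies τ for F, of u(x, σ, τ), where u(x, σ, τ) = I(B(b_{play(x,σ,τ)})) is the evaluated value of the branch corresponding to the unique play from x consistent with σ and τ. -/

import Mathlib

namespace JT

open scoped Classical

/-- Three truth values: 0 = 𝐟, 1 = 𝐮, 2 = 𝐭, with the truth order. -/
abbrev TV := Fin 3

/-- Complement on truth values: swaps 𝐭 and 𝐟, fixes 𝐮. -/
def TV.neg (v : TV) : TV := 2 - v

/-- A justification frame over a fact space `F`. -/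
structure JFrame (F : Type) where
  compl : F → F
  compl_invol : ∀ x, compl (compl x) = x
  tLit : F
  fLit : F
  uLit : F
  compl_t : compl tLit = fLit
  compl_u : compl uLit = uLit
  lit_distinct : tLit ≠ fLit ∧ tLit ≠ uLit ∧ fLit ≠ uLit
  defined : Set F
  defined_compl : ∀ x ∈ defined, compl x ∈ defined
  t_not_def : tLit ∉ defined
  f_not_def : fLit ∉ defined
  u_not_def : uLit ∉ defined
  rules : Set (F × Set F)
  rules_head : ∀ r ∈ rules, r.1 ∈ defined
  rules_body_ne : ∀ r ∈ rules, r.2.Nonempty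
  rules_ex : ∀ x ∈ defined, ∃ A : Set F, (x, A) ∈ rules

variable {F : Type}

def JFrame.openF (JF : JFrame F) : Set F := JF.definedᶜ

/-- A (three-valued) interpretation of the fact space. -/
structure Interp (JF : JFrame F) where
  val : F → TV
  val_compl : ∀ x, val (JF.compl x) = TV.neg (val x)
  val_t : val JF.tLit = 2
  val_f : val JF.fLit = 0
  val_u : val JF.uLit = 1

/-- Branches: finite (the whole finite sequence, as a list) or infinite. -/
inductive Branch (F : Type) where
  | fin : List F → Branch F
  | inf : (ℕ → F) → Branch F

def Branch.startsAt : Branch F → F → Prop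
  | .fin l, x => l.head? = some x
  | .inf s, x => s 0 = x

/-- `b` is a `JF`-branch: an infinite sequence in `F_d`, or a finite nonempty
sequence in `F_d` followed by an open fact. -/
def JFrame.IsBranch (JF : JFrame F) : Branch F → Prop
  | .fin l => 2 ≤ l.length ∧ (∀ a ∈ l.dropLast, a ∈ JF.defined) ∧
      (∀ e, l.getLast? = some e → e ∉ JF.defined)
  | .inf s => ∀ n, s n ∈ JF.defined

/-- Prepend a finite path `p` to a branch. -/
def Branch.prepend (p : List F) : Branch F → Branch F
  | .fin l => .fin (p ++ l)
  | .inf s => .inf (fun n => if h : n < p.length then p.get ⟨n, h⟩ else s (n - p.length))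

/-- Elementwise complement of a branch. -/
def Branch.compl (JF : JFrame F) : Branch F → Branch F
  | .fin l => .fin (l.map JF.compl)
  | .inf s => .inf (fun n => JF.compl (s n))

/-- A branch evaluation is consistent if `B(~b) = ~B(b)`. -/
def JFrame.ConsistentBE (JF : JFrame F) (B : Branch F → F) : Prop :=
  ∀ b : Branch F, JF.IsBranch b → B (Branch.compl JF b) = JF.compl (B b)

/-- A graph-like justification (labels are injective, so nodes are facts). -/
structure GraphJust (JF : JFrame F) where
  nodes : Set F
  edges : Set (F × F)
  edges_mem : ∀ e ∈ edges, e.1 ∈ nodes ∧ e.2 ∈ nodes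
  rule_of_internal : ∀ x ∈ nodes, (∃ y, (x, y) ∈ edges) →
      (x, {y | (x, y) ∈ edges}) ∈ JF.rules

namespace GraphJust
variable {JF : JFrame F}

def LocallyComplete (J : GraphJust JF) : Prop :=
  ∀ x ∈ J.nodes, x ∈ JF.defined → ∃ y, (x, y) ∈ J.edges

def Connected (J : GraphJust JF) : Prop :=
  ∀ x ∈ J.nodes, ∀ y ∈ J.nodes,
    Relation.ReflTransGen (fun a b => (a, b) ∈ J.edges ∨ (b, a) ∈ J.edges) x y

def IsRoot (J : GraphJust JF) (x : F) : Prop :=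
  x ∈ J.nodes ∧ ∀ y ∈ J.nodes, Relation.ReflTransGen (fun a b => (a, b) ∈ J.edges) x y

/-- `J`-branches starting in `x`: maximal paths in `J` from `x`. -/
def IsBranchFrom (J : GraphJust JF) (x : F) : Branch F → Prop
  | .fin l => l.head? = some x ∧ (∀ a ∈ l, a ∈ J.nodes) ∧
      List.Chain' (fun a b => (a, b) ∈ J.edges) l ∧
      (∀ e, l.getLast? = some e → ∀ y, (e, y) ∉ J.edges)
  | .inf s => s 0 = x ∧ (∀ n, s n ∈ J.nodes) ∧ (∀ n, (s n, s (n+1)) ∈ J.edges)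

/-- The value of `x` by `J` under `I`. -/
noncomputable def val (J : GraphJust JF) (B : Branch F → F) (x : F) (I : Interp JF) : TV :=
  ⨅ b ∈ {b | J.IsBranchFrom x b}, I.val (B b)

end GraphJust

/-- Underlying undirected simple graph of a directed relation. -/
def symGraph {α : Type} (e : α → α → Prop) : SimpleGraph α where
  Adj a b := a ≠ b ∧ (e a b ∨ e b a)
  symm := ⟨fun _ _ h => ⟨Ne.symm h.1, h.2.symm⟩⟩
  loopless := ⟨fun _ h => h.1 rfl⟩

/-- A tree-like justification: a directed labelled graph whose underlying
undirected graph is a forest. -/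
structure TreeJust (JF : JFrame F) where
  Node : Type
  edge : Node → Node → Prop
  label : Node → F
  rule_of_internal : ∀ n, (∃ m, edge n m) →
      (label n, {y | ∃ m, edge n m ∧ label m = y}) ∈ JF.rules
  forest : (symGraph edge).IsAcyclic

namespace TreeJust
variable {JF : JFrame F}

def LocallyComplete (T : TreeJust JF) : Prop :=
  ∀ n, T.label n ∈ JF.defined → ∃ m, T.edge n m

def Connected (T : TreeJust JF) : Prop :=
  ∀ a b : T.Node, Relation.ReflTransGen (fun u v => T.edge u v ∨ T.edge v u) a b

def IsRoot (T : TreeJust JF) (x : F) : Prop :=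
  ∃ n, T.label n = x ∧ ∀ m, Relation.ReflTransGen T.edge n m

def IsBranchFrom (T : TreeJust JF) (x : F) : Branch F → Prop
  | .fin l => ∃ ns : List T.Node, List.Chain' T.edge ns ∧ ns.map T.label = l ∧
      l.head? = some x ∧ (∀ nl, ns.getLast? = some nl → ∀ m, ¬ T.edge nl m)
  | .inf s => ∃ ns : ℕ → T.Node, (∀ n, T.edge (ns n) (ns (n+1))) ∧
      (∀ n, T.label (ns n) = s n) ∧ s 0 = x

noncomputable def val (T : TreeJust JF) (B : Branch F → F) (x : F) (I : Interp JF) : TV :=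
  ⨅ b ∈ {b | T.IsBranchFrom x b}, I.val (B b)

end TreeJust

/-- Graph-like supported value. -/
noncomputable def SVg (JF : JFrame F) (B : Branch F → F) (x : F) (I : Interp JF) : TV :=
  if x ∈ JF.defined then
    ⨆ J ∈ {J : GraphJust JF | J.LocallyComplete ∧ x ∈ J.nodes}, J.val B x I
  else I.val x

/-- Tree-like supported value. -/
noncomputable def SVt (JF : JFrame F) (B : Branch F → F) (x : F) (I : Interp JF) : TV :=
  if x ∈ JF.defined then
    ⨆ (T : TreeJust JF) (_ : T.LocallyComplete ∧ ∃ n, T.label n = x), T.val B x I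
  else I.val x

/-! ### Games -/

/-- A game graph: states owned by player 𝐓 (`T`) or by player 𝐅 (`Tᶜ`), edges `E`. -/
structure GameGraph (S : Type) where
  T : Set S
  E : Set (S × S)

namespace GameGraph
variable {S : Type}

def IsPath (G : GameGraph S) (p : List S) : Prop :=
  p ≠ [] ∧ List.Chain' (fun a b => (a, b) ∈ G.E) p

end GameGraph

/-- A general strategy for the player owning the states in `P`. -/
structure GenStrat {S : Type} (G : GameGraph S) (P : Set S) where
  next : List S → S
  next_ok : ∀ p s, G.IsPath p → p.getLast? = some s → s ∈ P →
      (∃ t2, (s, t2) ∈ G.E) → (s, next p) ∈ G.E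

/-- A positional strategy for the player owning the states in `P`. -/
structure PosStrat {S : Type} (G : GameGraph S) (P : Set S) where
  move : S → S
  move_ok : ∀ s ∈ P, (∃ t2, (s, t2) ∈ G.E) → (s, move s) ∈ G.E

/-- The embedding of positional strategies into general strategies. -/
noncomputable def PosStrat.toGen {S : Type} [Nonempty S] {G : GameGraph S} {P : Set S}
    (σ : PosStrat G P) : GenStrat G P where
  next p := σ.move (p.getLastD (Classical.arbitrary S))
  next_ok := by
    intro p s _ hlast hsP hout
    have h : p.getLastD (Classical.arbitrary S) = s := by
      rw [List.getLastD_eq_getLast?, hlast]; rfl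
    show (s, σ.move (p.getLastD (Classical.arbitrary S))) ∈ G.E
    rw [h]; exact σ.move_ok s hsP hout

/-- The finite prefixes of the unique play from `x` consistent with both strategies. -/
noncomputable def GameGraph.playPrefix {S : Type} (G : GameGraph S)
    (σ : GenStrat G G.T) (τ : GenStrat G G.Tᶜ) (x : S) : ℕ → List S
  | 0 => [x]
  | n + 1 =>
    let p := G.playPrefix σ τ x n
    match p.getLast? with
    | none => p
    | some s =>
      if (∃ t2, (s, t2) ∈ G.E) then
        p ++ [if s ∈ G.T then σ.next p else τ.next p]
      else p

/-- The trace of the play from `x`: the state at each time step, if any. -/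
noncomputable def GameGraph.playTrace {S : Type} (G : GameGraph S)
    (σ : GenStrat G G.T) (τ : GenStrat G G.Tᶜ) (x : S) : ℕ → Option S :=
  fun n => (G.playPrefix σ τ x n)[n]?

/-- Value of the play from `x`, for a valuation `v` of plays (given by traces). -/
noncomputable def GameGraph.uval {S V : Type} [CompleteLinearOrder V] (G : GameGraph S)
    (v : (ℕ → Option S) → V) (x : S) (σ : GenStrat G G.T) (τ : GenStrat G G.Tᶜ) : V :=
  v (G.playTrace σ τ x)

/-- Optimal pair of strategies. -/
def GameGraph.OptimalPair {S V : Type} [CompleteLinearOrder V] (G : GameGraph S)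
    (v : (ℕ → Option S) → V) (σs : GenStrat G G.T) (τs : GenStrat G G.Tᶜ) : Prop :=
  ∀ s : S, (∀ σ, G.uval v s σ τs ≤ G.uval v s σs τs) ∧
    (∀ τ, G.uval v s σs τs ≤ G.uval v s σs τ)

/-! ### The justification game -/

/-- Rule symbols `r_{x ← A}`. -/
def RuleSym (JF : JFrame F) : Type := {r : F × Set F // r ∈ JF.rules}

/-- States of the justification game: facts (owned by 𝐓) and rule symbols (owned by 𝐅). -/
abbrev GState (JF : JFrame F) : Type := F ⊕ RuleSym JF

instance (JF : JFrame F) : Nonempty (GState JF) := ⟨Sum.inl JF.tLit⟩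

/-- The game graph `G_JF` associated to a justification frame. -/
def JFrame.game (JF : JFrame F) : GameGraph (GState JF) where
  T := Set.range Sum.inl
  E := {e | (∃ (x : F) (r : RuleSym JF), e = (Sum.inl x, Sum.inr r) ∧ r.1.1 = x) ∨
            (∃ (r : RuleSym JF) (y : F), e = (Sum.inr r, Sum.inl y) ∧ y ∈ r.1.2)}

/-- The `JF`-branch obtained from the play from `s` by filtering out rule symbols. -/
noncomputable def JFrame.playBranch (JF : JFrame F)
    (σ : GenStrat JF.game JF.game.T) (τ : GenStrat JF.game JF.game.Tᶜ)
    (s : GState JF) : Branch F :=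
  if h : ∃ n, JF.game.playPrefix σ τ s (n+1) = JF.game.playPrefix σ τ s n then
    .fin ((JF.game.playPrefix σ τ s (Nat.find h)).filterMap Sum.getLeft?)
  else
    .inf (fun k => ((JF.game.playPrefix σ τ s (2*k+2)).filterMap Sum.getLeft?).getD k JF.tLit)

/-- `u(s, σ, τ) = I(B(b_{play(s,σ,τ)}))`. -/
noncomputable def JFrame.uS (JF : JFrame F) (B : Branch F → F) (I : Interp JF)
    (s : GState JF) (σ : GenStrat JF.game JF.game.T) (τ : GenStrat JF.game JF.game.Tᶜ) : TV :=
  I.val (B (JF.playBranch σ τ s))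

/-- Optimal pair of strategies in the justification game `G_{JS,I}`. -/
def JFrame.OptPair (JF : JFrame F) (B : Branch F → F) (I : Interp JF)
    (σs : GenStrat JF.game JF.game.T) (τs : GenStrat JF.game JF.game.Tᶜ) : Prop :=
  ∀ s : GState JF, (∀ σ, JF.uS B I s σ τs ≤ JF.uS B I s σs τs) ∧
    (∀ τ, JF.uS B I s σs τs ≤ JF.uS B I s σs τ)

/-! ### Play graphs of positional strategies, filtered -/

/-- Steps consistent with a positional strategy for 𝐓. -/
def JFrame.stepT (JF : JFrame F) (σ : PosStrat JF.game JF.game.T)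
    (a b : GState JF) : Prop :=
  (a, b) ∈ JF.game.E ∧ (a ∈ JF.game.T → b = σ.move a)

def JFrame.reachT (JF : JFrame F) (σ : PosStrat JF.game JF.game.T) (x : F) :
    Set (GState JF) :=
  {s | Relation.ReflTransGen (JF.stepT σ) (Sum.inl x) s}

/-- Nodes of the play graph of `σ` at `x` with rule symbols filtered out. -/
def JFrame.filtNodesT (JF : JFrame F) (σ : PosStrat JF.game JF.game.T) (x : F) : Set F :=
  {y | Sum.inl y ∈ JF.reachT σ x}

/-- Edges of the play graph of `σ` at `x` with rule symbols filtered out. -/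
def JFrame.filtEdgesT (JF : JFrame F) (σ : PosStrat JF.game JF.game.T) (x : F) :
    Set (F × F) :=
  {e | ∃ r : RuleSym JF, Sum.inl e.1 ∈ JF.reachT σ x ∧
      JF.stepT σ (Sum.inl e.1) (Sum.inr r) ∧ JF.stepT σ (Sum.inr r) (Sum.inl e.2)}

/-- Steps consistent with a positional strategy for 𝐅. -/
def JFrame.stepF (JF : JFrame F) (τ : PosStrat JF.game JF.game.Tᶜ)
    (a b : GState JF) : Prop :=
  (a, b) ∈ JF.game.E ∧ (a ∈ JF.game.Tᶜ → b = τ.move a)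

def JFrame.reachF (JF : JFrame F) (τ : PosStrat JF.game JF.game.Tᶜ) (x : F) :
    Set (GState JF) :=
  {s | Relation.ReflTransGen (JF.stepF τ) (Sum.inl x) s}

/-- Nodes of the play graph of `τ` at `x`, rule symbols filtered out, labels negated. -/
def JFrame.filtNodesF (JF : JFrame F) (τ : PosStrat JF.game JF.game.Tᶜ) (x : F) : Set F :=
  {w | ∃ y : F, w = JF.compl y ∧ Sum.inl y ∈ JF.reachF τ x}

/-- Edges of the play graph of `τ` at `x`, rule symbols filtered out, labels negated. -/
def JFrame.filtEdgesF (JF : JFrame F) (τ : PosStrat JF.game JF.game.Tᶜ) (x : F) :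
    Set (F × F) :=
  {e | ∃ (y z : F) (r : RuleSym JF), e = (JF.compl y, JF.compl z) ∧
      Sum.inl y ∈ JF.reachF τ x ∧
      JF.stepF τ (Sum.inl y) (Sum.inr r) ∧ JF.stepF τ (Sum.inr r) (Sum.inl z)}

/-! ### Complementation -/

/-- A selection function for `x` chooses an element from the body of each rule of `x`. -/
def JFrame.SelectionFn (JF : JFrame F) (x : F) : Type :=
  {s : {A : Set F // (x, A) ∈ JF.rules} → F // ∀ A, s A ∈ A.1}

/-- `JF` is complementary: fixed under complementation, i.e. for each defined `x` and
selection function `s` for `x`, the rule `~x ← ~Im(s)` belongs to the rules. -/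
def JFrame.Complementary (JF : JFrame F) : Prop :=
  ∀ x ∈ JF.defined, ∀ s : JF.SelectionFn x,
    (JF.compl x, JF.compl '' Set.range s.1) ∈ JF.rules

/-! ### Monotone, selective, transitive branch evaluations -/

/-- Monotone branch evaluation. -/
def JFrame.MonotoneBE (JF : JFrame F) (B : Branch F → F) : Prop :=
  ∀ (I : Interp JF) (x : F), x ∈ JF.defined →
    ∀ b1 b2 : Branch F, JF.IsBranch b1 → JF.IsBranch b2 →
      b1.startsAt x → b2.startsAt x →
      ∀ p : List F, (∀ a ∈ p, a ∈ JF.defined) →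
        I.val (B b1) ≤ I.val (B b2) →
        I.val (B (Branch.prepend p b1)) ≤ I.val (B (Branch.prepend p b2))

/-- Transitive branch evaluation: dropping the first element of a branch with at
least three elements does not change its value. -/
def JFrame.TransitiveBE (JF : JFrame F) (B : Branch F → F) : Prop :=
  ∀ (x0 : F) (b : Branch F), JF.IsBranch b → B (Branch.prepend [x0] b) = B b

/-- A finite loop starting in `x`. -/
def JFrame.IsLoopAt (JF : JFrame F) (x : F) (q : List F) : Prop :=
  q.head? = some x ∧ ∀ a ∈ q, a ∈ JF.defined

/-- Finite iterations of loops from `L`. -/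
def FinIter (L : Set (List F)) : Set (List F) :=
  {w | ∃ ls : List (List F), (∀ l ∈ ls, l ∈ L) ∧ w = ls.flatten}

/-- `s` is the concatenation of the infinite sequence of lists `f`. -/
def IsConcat (f : ℕ → List F) (s : ℕ → F) : Prop :=
  ∃ c : ℕ → ℕ, c 0 = 0 ∧ (∀ i, c (i+1) = c i + (f i).length) ∧
    ∀ i k (h : k < (f i).length), s (c i + k) = (f i).get ⟨k, h⟩

/-- `L^ω`: infinite iterations of loops from `L`, as branches. -/
def InfIter (L : Set (List F)) : Set (Branch F) :=
  {b | ∃ (f : ℕ → List F) (s : ℕ → F), (∀ i, f i ∈ L) ∧ (∀ i, f i ≠ []) ∧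
      IsConcat f s ∧ b = .inf s}

/-- `p L* K`. -/
def StarKSet (p : List F) (L : Set (List F)) (K : Set (Branch F)) : Set (Branch F) :=
  {b | ∃ w ∈ FinIter L, ∃ k ∈ K, b = Branch.prepend (p ++ w) k}

/-- `p L^ω`. -/
def OmegaSet (p : List F) (L : Set (List F)) : Set (Branch F) :=
  {b | ∃ b0 ∈ InfIter L, b = Branch.prepend p b0}

/-- `p K`. -/
def PrepSet (p : List F) (K : Set (Branch F)) : Set (Branch F) :=
  (Branch.prepend p) '' K

/-- Selective branch evaluation with respect to `I`. -/
def JFrame.SelectiveBE (JF : JFrame F) (B : Branch F → F) (I : Interp JF) : Prop :=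
  ∀ p : List F, (∀ a ∈ p, a ∈ JF.defined) →
  ∀ x ∈ JF.defined,
  ∀ M N : Set (List F), (∀ q ∈ M, JF.IsLoopAt x q) → (∀ q ∈ N, JF.IsLoopAt x q) →
  ∀ K : Set (Branch F), (∀ b ∈ K, JF.IsBranch b ∧ b.startsAt x) →
  ∀ b ∈ StarKSet p (M ∪ N) K ∪ OmegaSet p (M ∪ N),
    (∃ bs ∈ OmegaSet p M ∪ OmegaSet p N ∪ PrepSet p K, I.val (B bs) ≤ I.val (B b)) ∧
    (∃ bu ∈ OmegaSet p M ∪ OmegaSet p N ∪ PrepSet p K, I.val (B b) ≤ I.val (B bu))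

/-! ### Concrete branch evaluations -/

/-- Supported (completion) branch evaluation: maps a branch to its second element. -/
def Bsp (JF : JFrame F) : Branch F → F
  | .fin l => l[1]?.getD JF.uLit
  | .inf s => s 1

/-- Kripke-Kleene branch evaluation. -/
def Bkk (JF : JFrame F) : Branch F → F
  | .fin l => l.getLastD JF.uLit
  | .inf _ => JF.uLit

/-- A sign function; `true` means positive, `false` negative. -/
structure SignFn (JF : JFrame F) where
  sgn : F → Bool
  sgn_compl : ∀ x ∈ JF.defined, sgn (JF.compl x) ≠ sgn x

/-- Well-founded branch evaluation. -/
noncomputable def Bwf (JF : JFrame F) (sg : SignFn JF) : Branch F → F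
  | .fin l => l.getLastD JF.uLit
  | .inf s =>
    if ∃ n, ∀ i ≥ n, sg.sgn (s i) = false then JF.tLit
    else if ∃ n, ∀ i ≥ n, sg.sgn (s i) = true then JF.fLit
    else JF.uLit

/-- Stable branch evaluation. -/
noncomputable def Bst (JF : JFrame F) (sg : SignFn JF) : Branch F → F
  | .fin l =>
    match l with
    | [] => JF.uLit
    | x0 :: rest =>
      match rest.find? (fun y => sg.sgn y != sg.sgn x0) with
      | some y => y
      | none => Bwf JF sg (.fin (x0 :: rest))
  | .inf s =>
    if h : ∃ i, sg.sgn (s i) ≠ sg.sgn (s 0) then s (Nat.find h)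
    else Bwf JF sg (.inf s)

end JT

namespace JT

/-! Against the positional strategy `σ`, a play from `x` alternates a fact `y`, the rule symbol
`σ y` and a fact of its body chosen by 𝐅, so dropping the rule symbols leaves a maximal path of
`J_σ(x)`, i.e. a `J`-branch from `x`. Conversely, every `J`-branch from `x` is obtained in this way
from the general strategy of 𝐅 that reads the next fact off the branch (`followStrat`). Hence both
infima range over the same set of branches. -/

open scoped Classical

namespace GameGraph

variable {S : Type} {G : GameGraph S} {σ : GenStrat G G.T} {τ : GenStrat G G.Tᶜ} {x : S} {n m : ℕ}

theorem playPrefix_succ_of_getLast? {s : S} (hs : (G.playPrefix σ τ x n).getLast? = some s) :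
    G.playPrefix σ τ x (n + 1) =
      if ∃ t, (s, t) ∈ G.E then
        G.playPrefix σ τ x n ++
          [if s ∈ G.T then σ.next (G.playPrefix σ τ x n) else τ.next (G.playPrefix σ τ x n)]
      else G.playPrefix σ τ x n := by
  rw [playPrefix, hs]

theorem playPrefix_succ_of_exists_edge {s : S} (hs : (G.playPrefix σ τ x n).getLast? = some s)
    (he : ∃ t, (s, t) ∈ G.E) :
    G.playPrefix σ τ x (n + 1) = G.playPrefix σ τ x n ++
      [if s ∈ G.T then σ.next (G.playPrefix σ τ x n) else τ.next (G.playPrefix σ τ x n)] := by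
  rw [playPrefix_succ_of_getLast? hs, if_pos he]

theorem playPrefix_succ_of_not_exists_edge {s : S}
    (hs : (G.playPrefix σ τ x n).getLast? = some s) (he : ¬∃ t, (s, t) ∈ G.E) :
    G.playPrefix σ τ x (n + 1) = G.playPrefix σ τ x n := by
  rw [playPrefix_succ_of_getLast? hs, if_neg he]

theorem playPrefix_ne_nil : G.playPrefix σ τ x n ≠ [] := by
  induction n with
  | zero => simp [playPrefix]
  | succ n ih =>
    rw [playPrefix]
    split
    · exact ih
    · split_ifs <;> simp [ih]

theorem playPrefix_succ_eq_or :
    G.playPrefix σ τ x (n + 1) = G.playPrefix σ τ x n ∨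
      ∃ a, G.playPrefix σ τ x (n + 1) = G.playPrefix σ τ x n ++ [a] := by
  obtain ⟨s, hs⟩ := Option.ne_none_iff_exists'.mp
    (List.getLast?_eq_none_iff.not.mpr playPrefix_ne_nil)
  by_cases he : ∃ t, (s, t) ∈ G.E
  · exact Or.inr ⟨_, playPrefix_succ_of_exists_edge hs he⟩
  · exact Or.inl (playPrefix_succ_of_not_exists_edge hs he)

theorem playPrefix_isPrefix (h : n ≤ m) : G.playPrefix σ τ x n <+: G.playPrefix σ τ x m := by
  induction m, h using Nat.le_induction with
  | base => exact List.prefix_refl _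
  | succ m _ ih =>
    rcases playPrefix_succ_eq_or (σ := σ) (τ := τ) (x := x) (n := m) with h | ⟨a, h⟩
    · rwa [h]
    · exact h ▸ ih.trans (List.prefix_append _ _)

theorem head?_playPrefix : (G.playPrefix σ τ x n).head? = some x := by
  obtain ⟨t, ht⟩ := playPrefix_isPrefix (σ := σ) (τ := τ) (x := x) (Nat.zero_le n)
  simp [← ht, playPrefix]

theorem length_playPrefix_le : (G.playPrefix σ τ x n).length ≤ n + 1 := by
  induction n with
  | zero => simp [playPrefix]
  | succ n ih =>
    rcases playPrefix_succ_eq_or (σ := σ) (τ := τ) (x := x) (n := n) with h | ⟨a, h⟩ <;>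
      simp only [h, List.length_append, List.length_singleton] <;> omega

theorem length_playPrefix_of_forall_ne
    (h : ∀ n, G.playPrefix σ τ x (n + 1) ≠ G.playPrefix σ τ x n) :
    (G.playPrefix σ τ x n).length = n + 1 := by
  induction n with
  | zero => simp [playPrefix]
  | succ n ih =>
    obtain ⟨a, ha⟩ := playPrefix_succ_eq_or.resolve_left (h n)
    simp [ha, ih]

theorem playPrefix_eq_of_succ_eq (h : G.playPrefix σ τ x (n + 1) = G.playPrefix σ τ x n)
    (hm : n ≤ m) : G.playPrefix σ τ x m = G.playPrefix σ τ x n := by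
  induction m, hm using Nat.le_induction with
  | base => rfl
  | succ m _ ih => rw [playPrefix, ih, ← playPrefix, h]

theorem playPrefix_eq_of_succ_eq_of_succ_eq
    (hn : G.playPrefix σ τ x (n + 1) = G.playPrefix σ τ x n)
    (hm : G.playPrefix σ τ x (m + 1) = G.playPrefix σ τ x m) :
    G.playPrefix σ τ x n = G.playPrefix σ τ x m :=
  (playPrefix_eq_of_succ_eq hn (le_max_left n m)).symm.trans
    (playPrefix_eq_of_succ_eq hm (le_max_right n m))

theorem not_exists_edge_of_playPrefix_succ_eq
    (h : G.playPrefix σ τ x (n + 1) = G.playPrefix σ τ x n) {s : S}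
    (hs : (G.playPrefix σ τ x n).getLast? = some s) : ¬∃ t, (s, t) ∈ G.E := fun he => by
  have := congrArg List.length ((playPrefix_succ_of_exists_edge hs he).symm.trans h)
  simp at this

end GameGraph

section Positional

variable {S : Type} [Nonempty S] {G : GameGraph S} (σ : PosStrat G G.T)

theorem PosStrat.toGen_next {p : List S} {s : S} (hs : p.getLast? = some s) :
    σ.toGen.next p = σ.move s := by
  simp [PosStrat.toGen, List.getLastD_eq_getLast?, hs]

theorem GameGraph.isChain_playPrefix_toGen (τ : GenStrat G G.Tᶜ) (x : S) (n : ℕ) :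
    (G.playPrefix σ.toGen τ x n).IsChain
      (fun a b => (a, b) ∈ G.E ∧ (a ∈ G.T → b = σ.move a)) := by
  induction n with
  | zero => exact List.isChain_singleton x
  | succ n ih =>
    obtain ⟨s, hs⟩ := Option.ne_none_iff_exists'.mp
      (List.getLast?_eq_none_iff.not.mpr G.playPrefix_ne_nil)
    by_cases he : ∃ t, (s, t) ∈ G.E
    · rw [G.playPrefix_succ_of_exists_edge hs he]
      refine List.isChain_append.2 ⟨ih, List.isChain_singleton _, ?_⟩
      simp only [hs, Option.mem_def, Option.some.injEq, List.head?_cons, forall_eq']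
      split_ifs with hT
      · rw [σ.toGen_next hs]
        exact ⟨σ.move_ok s hT he, fun _ => rfl⟩
      · exact ⟨τ.next_ok _ s ⟨G.playPrefix_ne_nil, ih.imp fun _ _ h => h.1⟩ hs hT he,
          fun h => absurd h hT⟩
    · rwa [G.playPrefix_succ_of_not_exists_edge hs he]

end Positional

section JustificationGame

variable {F : Type} {JF : JFrame F}

@[simp] theorem inl_mem_game_T (y : F) : (Sum.inl y : GState JF) ∈ JF.game.T := ⟨y, rfl⟩

@[simp] theorem inr_notMem_game_T (r : RuleSym JF) : (Sum.inr r : GState JF) ∉ JF.game.T := by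
  rintro ⟨_, ⟨⟩⟩

@[simp] theorem inl_inr_mem_game_E {y : F} {r : RuleSym JF} :
    ((Sum.inl y : GState JF), Sum.inr r) ∈ JF.game.E ↔ r.1.1 = y := by
  simp [JFrame.game, eq_comm]

@[simp] theorem inr_inl_mem_game_E {r : RuleSym JF} {z : F} :
    ((Sum.inr r : GState JF), Sum.inl z) ∈ JF.game.E ↔ z ∈ r.1.2 := by
  simp [JFrame.game]

@[simp] theorem inl_inl_notMem_game_E {y z : F} :
    ((Sum.inl y : GState JF), Sum.inl z) ∉ JF.game.E := by
  simp [JFrame.game]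

@[simp] theorem inr_inr_notMem_game_E {r r' : RuleSym JF} :
    ((Sum.inr r : GState JF), Sum.inr r') ∉ JF.game.E := by
  simp [JFrame.game]

theorem defined_of_inl_mem_game_E {y : F} {t : GState JF} (h : (Sum.inl y, t) ∈ JF.game.E) :
    y ∈ JF.defined := by
  rcases t with z | r
  · simp at h
  · exact (inl_inr_mem_game_E.1 h) ▸ JF.rules_head r.1 r.2

theorem exists_inr_mem_game_E (r : RuleSym JF) :
    ∃ t, ((Sum.inr r : GState JF), t) ∈ JF.game.E :=
  let ⟨z, hz⟩ := JF.rules_body_ne r.1 r.2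
  ⟨Sum.inl z, inr_inl_mem_game_E.2 hz⟩

theorem length_le_two_mul_length_filterMap_getLeft_add_one :
    ∀ {p : List (GState JF)}, p.IsChain (fun a b => (a, b) ∈ JF.game.E) →
      p.length ≤ 2 * (p.filterMap Sum.getLeft?).length + 1
  | [], _ => by simp
  | .inl _ :: _, hp => by
    have := length_le_two_mul_length_filterMap_getLeft_add_one hp.tail
    simp only [List.tail_cons, List.filterMap_cons, Sum.getLeft?, List.length_cons] at this ⊢
    omega
  | [.inr _], _ => by simp [Sum.getLeft?]
  | .inr _ :: .inr _ :: _, hp => absurd (List.isChain_cons_cons.1 hp).1 (by simp)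
  | .inr _ :: .inl _ :: _, hp => by
    have := length_le_two_mul_length_filterMap_getLeft_add_one hp.tail.tail
    simp only [List.tail_cons, List.filterMap_cons, Sum.getLeft?, List.length_cons] at this ⊢
    omega

variable {σ : PosStrat JF.game JF.game.T} {x : F}

theorem isChain_filterMap_getLeft :
    ∀ {p : List (GState JF)}, p.IsChain (JF.stepT σ) → (∀ a ∈ p, a ∈ JF.reachT σ x) →
      (p.filterMap Sum.getLeft?).IsChain (fun a b => (a, b) ∈ JF.filtEdgesT σ x)
  | [], _, _ => .nil
  | .inr _ :: _, hp, hr => by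
    simpa only [List.tail_cons, List.filterMap_cons, Sum.getLeft?] using
      isChain_filterMap_getLeft hp.tail fun a ha => hr a (List.mem_cons_of_mem _ ha)
  | [.inl _], _, _ => List.isChain_singleton _
  | .inl _ :: .inl _ :: _, hp, _ => absurd (List.isChain_cons_cons.1 hp).1.1 (by simp)
  | [.inl _, .inr _], _, _ => List.isChain_singleton _
  | .inl _ :: .inr _ :: .inr _ :: _, hp, _ =>
    absurd (List.isChain_cons_cons.1 (List.isChain_cons_cons.1 hp).2).1.1 (by simp)
  | .inl y :: .inr r :: .inl z :: q, hp, hr => by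
    obtain ⟨hyr, hrz, hq⟩ := by simpa only [List.isChain_cons_cons] using hp
    have ih := isChain_filterMap_getLeft (p := .inl z :: q) hq
      fun a ha => hr a (List.mem_cons_of_mem _ (List.mem_cons_of_mem _ ha))
    simp only [List.filterMap_cons, Sum.getLeft?] at ih ⊢
    exact List.isChain_cons_cons.2 ⟨⟨r, hr _ List.mem_cons_self, hyr, hrz⟩, ih⟩

theorem exists_mem_filtEdgesT_of_defined {y : F} (hy : Sum.inl y ∈ JF.reachT σ x)
    (hyd : y ∈ JF.defined) : ∃ z, (y, z) ∈ JF.filtEdgesT σ x := by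
  obtain ⟨A, hA⟩ := JF.rules_ex y hyd
  have hmove := σ.move_ok _ (inl_mem_game_T y) ⟨Sum.inr ⟨(y, A), hA⟩, inl_inr_mem_game_E.2 rfl⟩
  obtain ⟨r, hr⟩ : ∃ r, σ.move (Sum.inl y) = Sum.inr r := by
    rcases h : σ.move (Sum.inl y) with z | r
    · rw [h] at hmove; simp at hmove
    · exact ⟨r, rfl⟩
  obtain ⟨z, hz⟩ := JF.rules_body_ne r.1 r.2
  exact ⟨z, r, hy, ⟨hr ▸ hmove, fun _ => hr.symm⟩, inr_inl_mem_game_E.2 hz, by simp⟩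

theorem mem_reachT_of_mem_playPrefix (τ : GenStrat JF.game JF.game.Tᶜ) {n : ℕ} {a : GState JF}
    (ha : a ∈ JF.game.playPrefix σ.toGen τ (Sum.inl x) n) : a ∈ JF.reachT σ x := by
  obtain ⟨q, hq⟩ := List.head?_eq_some_iff.1
    (JF.game.head?_playPrefix (σ := σ.toGen) (τ := τ) (n := n))
  have hchain := JF.game.isChain_playPrefix_toGen σ τ (Sum.inl x) n
  rw [hq] at hchain ha
  rcases List.mem_cons.1 ha with rfl | ha
  · exact Relation.ReflTransGen.refl
  · exact hchain.cons_induction (· ∈ JF.reachT σ x) q (fun _ _ h hy => hy.tail h) .refl a ha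

end JustificationGame

section PlayBranch

variable {F : Type} {JF : JFrame F}

theorem JFrame.playBranch_of_playPrefix_succ_eq {σ : GenStrat JF.game JF.game.T}
    {τ : GenStrat JF.game JF.game.Tᶜ} {s : GState JF} {n : ℕ}
    (h : JF.game.playPrefix σ τ s (n + 1) = JF.game.playPrefix σ τ s n) :
    JF.playBranch σ τ s = .fin ((JF.game.playPrefix σ τ s n).filterMap Sum.getLeft?) := by
  have hex : ∃ n, JF.game.playPrefix σ τ s (n + 1) = JF.game.playPrefix σ τ s n := ⟨n, h⟩
  rw [JFrame.playBranch, dif_pos hex,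
    JF.game.playPrefix_eq_of_succ_eq_of_succ_eq (Nat.find_spec hex) h]

variable {σ : PosStrat JF.game JF.game.T} {x : F} (τ : GenStrat JF.game JF.game.Tᶜ) (n : ℕ)

theorem head?_filterMap_playPrefix :
    ((JF.game.playPrefix σ.toGen τ (.inl x) n).filterMap Sum.getLeft?).head? = some x := by
  obtain ⟨q, hq⟩ := List.head?_eq_some_iff.1
    (JF.game.head?_playPrefix (σ := σ.toGen) (τ := τ) (x := .inl x) (n := n))
  simp [hq, Sum.getLeft?]

theorem mem_filtNodesT_of_mem_filterMap_playPrefix {y : F}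
    (hy : y ∈ (JF.game.playPrefix σ.toGen τ (.inl x) n).filterMap Sum.getLeft?) :
    y ∈ JF.filtNodesT σ x := by
  obtain ⟨a, ha, hay⟩ := List.mem_filterMap.1 hy
  obtain rfl := Sum.getLeft?_eq_some_iff.1 hay
  exact mem_reachT_of_mem_playPrefix τ ha

theorem isChain_filterMap_playPrefix :
    ((JF.game.playPrefix σ.toGen τ (.inl x) n).filterMap Sum.getLeft?).IsChain
      (fun a b => (a, b) ∈ JF.filtEdgesT σ x) :=
  isChain_filterMap_getLeft (JF.game.isChain_playPrefix_toGen σ τ (.inl x) n)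
    fun _ ha => mem_reachT_of_mem_playPrefix τ ha

variable {J : GraphJust JF} {τ n}

theorem isBranchFrom_playBranch_of_succ_eq (hn : J.nodes = JF.filtNodesT σ x)
    (he : J.edges = JF.filtEdgesT σ x)
    (hstable : JF.game.playPrefix σ.toGen τ (.inl x) (n + 1) =
      JF.game.playPrefix σ.toGen τ (.inl x) n) :
    J.IsBranchFrom x (JF.playBranch σ.toGen τ (.inl x)) := by
  rw [JFrame.playBranch_of_playPrefix_succ_eq hstable]
  obtain ⟨a, hlast⟩ := Option.ne_none_iff_exists'.mp
    (List.getLast?_eq_none_iff.not.mpr (JF.game.playPrefix_ne_nil (n := n)))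
  have hstuck := JF.game.not_exists_edge_of_playPrefix_succ_eq hstable hlast
  obtain ⟨e, rfl⟩ : ∃ e, a = .inl e := by
    rcases a with e | r
    · exact ⟨e, rfl⟩
    · exact absurd (exists_inr_mem_game_E r) hstuck
  refine ⟨head?_filterMap_playPrefix τ n,
    fun y hy => hn ▸ mem_filtNodesT_of_mem_filterMap_playPrefix τ n hy,
    he ▸ isChain_filterMap_playPrefix τ n, fun e' he' z hz => ?_⟩
  obtain ⟨q, hq⟩ := List.getLast?_eq_some_iff.1 hlast
  simp only [hq, List.filterMap_append, Sum.getLeft?, List.filterMap_cons, List.filterMap_nil,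
    List.getLast?_concat, Option.some.injEq] at he'
  subst he'
  obtain ⟨r, -, hstep, -⟩ := he ▸ hz
  exact hstuck ⟨_, hstep.1⟩

theorem isBranchFrom_playBranch_of_forall_ne (hn : J.nodes = JF.filtNodesT σ x)
    (he : J.edges = JF.filtEdgesT σ x)
    (hgrow : ∀ n, JF.game.playPrefix σ.toGen τ (.inl x) (n + 1) ≠
      JF.game.playPrefix σ.toGen τ (.inl x) n) :
    J.IsBranchFrom x (JF.playBranch σ.toGen τ (.inl x)) := by
  rw [JFrame.playBranch, dif_neg (not_exists.2 hgrow)]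
  set L := fun k => (JF.game.playPrefix σ.toGen τ (.inl x) (2 * k + 2)).filterMap Sum.getLeft?
  change J.IsBranchFrom x (.inf fun k => (L k).getD k JF.tLit)
  have hlen (k : ℕ) : k < (L k).length := by
    have := length_le_two_mul_length_filterMap_getLeft_add_one
      ((JF.game.isChain_playPrefix_toGen σ τ (.inl x) (2 * k + 2)).imp fun _ _ h => h.1)
    rw [JF.game.length_playPrefix_of_forall_ne hgrow] at this
    simp only [L]
    omega
  have hget {k m : ℕ} (hkm : k ≤ m) :
      (L k).getD k JF.tLit = (L m)[k]'((hlen k).trans_le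
        (((JF.game.playPrefix_isPrefix (by omega)).filterMap _).length_le)) := by
    rw [List.getD_eq_getElem _ _ (hlen k)]
    exact ((JF.game.playPrefix_isPrefix (by omega)).filterMap _).getElem _
  refine ⟨?_, fun k => ?_, fun k => ?_⟩
  · dsimp only
    rw [hget le_rfl, ← Option.some_inj, ← List.getElem?_eq_getElem, ← List.head?_eq_getElem?]
    exact head?_filterMap_playPrefix τ _
  · dsimp only
    rw [hget le_rfl, hn]
    exact mem_filtNodesT_of_mem_filterMap_playPrefix τ _ (List.getElem_mem _)
  · dsimp only
    rw [hget (Nat.le_succ k), hget le_rfl, he]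
    exact (isChain_filterMap_playPrefix τ _).getElem k (hlen _)

theorem isBranchFrom_playBranch (hn : J.nodes = JF.filtNodesT σ x)
    (he : J.edges = JF.filtEdgesT σ x) (τ : GenStrat JF.game JF.game.Tᶜ) :
    J.IsBranchFrom x (JF.playBranch σ.toGen τ (.inl x)) := by
  by_cases hstable : ∃ n, JF.game.playPrefix σ.toGen τ (.inl x) (n + 1) =
      JF.game.playPrefix σ.toGen τ (.inl x) n
  · obtain ⟨n, hstable⟩ := hstable
    exact isBranchFrom_playBranch_of_succ_eq hn he hstable
  · exact isBranchFrom_playBranch_of_forall_ne hn he (not_exists.1 hstable)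

end PlayBranch

theorem _root_.List.filterMap_getElem?_range_length {α : Type*} (l : List α) :
    (List.range l.length).filterMap (l[·]?) = l := by
  induction l using List.reverseRecOn with
  | nil => rfl
  | append_singleton l a ih =>
    rw [List.length_append, List.length_singleton, List.range_succ, List.filterMap_append,
      List.filterMap_congr (g := (l[·]?)) fun k hk =>
        List.getElem?_append_left (List.mem_range.1 hk), ih]
    simp

section FollowStrat

variable {F : Type} {JF : JFrame F}

noncomputable def RuleSym.pick (r : RuleSym JF) : Option F → F
  | some z => if z ∈ r.1.2 then z else (JF.rules_body_ne r.1 r.2).some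
  | none => (JF.rules_body_ne r.1 r.2).some

theorem RuleSym.pick_mem (r : RuleSym JF) : ∀ o, r.pick o ∈ r.1.2
  | some z => by
    by_cases hz : z ∈ r.1.2
    · simp [RuleSym.pick, hz]
    · simpa [RuleSym.pick, hz] using (JF.rules_body_ne r.1 r.2).some_mem
  | none => (JF.rules_body_ne r.1 r.2).some_mem

theorem RuleSym.pick_some {r : RuleSym JF} {z : F} (hz : z ∈ r.1.2) : r.pick (some z) = z :=
  if_pos hz

/-- 𝐅 moves to the fact `g k` whenever it is in the body of the current rule symbol: a play prefix
from a fact ending in a rule symbol has length `2 * k`, where `k` indexes the next fact. -/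
noncomputable def followStrat (JF : JFrame F) (g : ℕ → Option F) :
    GenStrat JF.game JF.game.Tᶜ where
  next p := match p.getLast? with
    | some (.inr r) => .inl (r.pick (g (p.length / 2)))
    | _ => .inl JF.tLit
  next_ok p s _ hs hsF _ := by
    rcases s with y | r
    · exact absurd (inl_mem_game_T y) hsF
    · simpa only [hs] using inr_inl_mem_game_E.2 (r.pick_mem _)

theorem followStrat_next {g : ℕ → Option F} {p : List (GState JF)} {r : RuleSym JF}
    (hp : p.getLast? = some (.inr r)) :
    (followStrat JF g).next p = .inl (r.pick (g (p.length / 2))) := by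
  simp [followStrat, hp]

variable {σ : PosStrat JF.game JF.game.T} {x : F}

theorem playPrefix_followStrat {g : ℕ → Option F} (hg0 : g 0 = some x)
    (hg : ∀ k z, g (k + 1) = some z → ∃ y, g k = some y ∧ (y, z) ∈ JF.filtEdgesT σ x) :
    ∀ k y, g k = some y →
      (JF.game.playPrefix σ.toGen (followStrat JF g) (.inl x) (2 * k)).getLast? = some (.inl y) ∧
      (JF.game.playPrefix σ.toGen (followStrat JF g) (.inl x) (2 * k)).length = 2 * k + 1 ∧
      (JF.game.playPrefix σ.toGen (followStrat JF g) (.inl x) (2 * k)).filterMap Sum.getLeft? =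
        (List.range (k + 1)).filterMap g := by
  intro k
  induction k with
  | zero =>
    intro y hy
    obtain rfl : y = x := Option.some.inj (hy.symm.trans hg0)
    simp [GameGraph.playPrefix, Sum.getLeft?, hg0]
  | succ k ih =>
    intro z hz
    obtain ⟨y, hy, r, -, hyr, hrz⟩ := hg k z hz
    obtain ⟨hlast, hlen, hfilter⟩ := ih y hy
    have h1 : JF.game.playPrefix σ.toGen (followStrat JF g) (.inl x) (2 * k + 1) =
        JF.game.playPrefix σ.toGen (followStrat JF g) (.inl x) (2 * k) ++ [.inr r] := by
      rw [JF.game.playPrefix_succ_of_exists_edge hlast ⟨_, hyr.1⟩, if_pos (inl_mem_game_T y),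
        σ.toGen_next hlast, hyr.2 (inl_mem_game_T y)]
    have hlast' : (JF.game.playPrefix σ.toGen (followStrat JF g) (.inl x) (2 * k + 1)).getLast? =
        some (.inr r) := by
      rw [h1]; exact List.getLast?_concat
    have h2 : JF.game.playPrefix σ.toGen (followStrat JF g) (.inl x) (2 * (k + 1)) =
        JF.game.playPrefix σ.toGen (followStrat JF g) (.inl x) (2 * k + 1) ++ [.inl z] := by
      rw [show 2 * (k + 1) = 2 * k + 1 + 1 by ring,
        JF.game.playPrefix_succ_of_exists_edge hlast' ⟨_, hrz.1⟩, if_neg (inr_notMem_game_T r),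
        followStrat_next hlast', h1, List.length_append, hlen, List.length_singleton,
        show (2 * k + 1 + 1) / 2 = k + 1 by omega, hz,
        RuleSym.pick_some (inr_inl_mem_game_E.1 hrz.1)]
    refine ⟨by rw [h2]; exact List.getLast?_concat,
      by simp only [h2, h1, List.length_append, List.length_singleton, hlen]; ring, ?_⟩
    rw [h2, h1, List.range_succ (n := k + 1)]
    simp [List.filterMap_cons, hfilter, Sum.getLeft?, hz]

end FollowStrat

section Branches

variable {F : Type} {JF : JFrame F} {σ : PosStrat JF.game JF.game.T} {x : F} {J : GraphJust JF}

def Branch.get? : Branch F → ℕ → Option F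
  | .fin l, k => l[k]?
  | .inf s, k => some (s k)

theorem playBranch_followStrat_fin (hn : J.nodes = JF.filtNodesT σ x)
    (he : J.edges = JF.filtEdgesT σ x) {l : List F} (hb : J.IsBranchFrom x (.fin l)) :
    JF.playBranch σ.toGen (followStrat JF (l[·]?)) (.inl x) = .fin l := by
  obtain ⟨hhead, hnodes, hchain, hmax⟩ := hb
  have hl : 0 < l.length := List.length_pos_iff.2 (by rintro rfl; simp at hhead)
  have hrun := playPrefix_followStrat (σ := σ) (g := (l[·]?))
    (by rwa [← List.head?_eq_getElem?]) fun k z hz => by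
      obtain ⟨hk, rfl⟩ := List.getElem?_eq_some_iff.1 hz
      exact ⟨_, List.getElem?_eq_getElem (by omega), he ▸ hchain.getElem k hk⟩
  obtain ⟨hlast, -, hfilter⟩ := hrun (l.length - 1) _ (List.getElem?_eq_getElem (by omega))
  have hstuck : ¬∃ t, ((Sum.inl l[l.length - 1] : GState JF), t) ∈ JF.game.E := by
    rintro ⟨t, ht⟩
    have hreach : l[l.length - 1] ∈ JF.filtNodesT σ x := hn ▸ hnodes _ (List.getElem_mem _)
    obtain ⟨z, hz⟩ := exists_mem_filtEdgesT_of_defined hreach (defined_of_inl_mem_game_E ht)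
    exact hmax _ (by rw [List.getLast?_eq_getElem?, List.getElem?_eq_getElem]) z (he ▸ hz)
  rw [JFrame.playBranch_of_playPrefix_succ_eq
      (JF.game.playPrefix_succ_of_not_exists_edge hlast hstuck),
    hfilter, Nat.sub_add_cancel hl, List.filterMap_getElem?_range_length]

theorem playBranch_followStrat_inf (he : J.edges = JF.filtEdgesT σ x) {s : ℕ → F}
    (hb : J.IsBranchFrom x (.inf s)) :
    JF.playBranch σ.toGen (followStrat JF fun k => some (s k)) (.inl x) = .inf s := by
  obtain ⟨h0, -, hedge⟩ := hb
  have hrun := playPrefix_followStrat (σ := σ) (g := fun k => some (s k)) (by rw [h0])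
    fun k z hz => ⟨s k, rfl, Option.some.inj hz ▸ he ▸ hedge k⟩
  have hgrow (n : ℕ) : JF.game.playPrefix σ.toGen (followStrat JF fun k => some (s k)) (.inl x)
      (n + 1) ≠ JF.game.playPrefix σ.toGen (followStrat JF fun k => some (s k)) (.inl x) n := by
    intro h
    have hlen := (hrun (n + 1) _ rfl).2.1
    rw [JF.game.playPrefix_eq_of_succ_eq h (by omega)] at hlen
    have := JF.game.length_playPrefix_le (σ := σ.toGen) (τ := followStrat JF fun k => some (s k))
      (x := .inl x) (n := n)
    omega
  rw [JFrame.playBranch, dif_neg (not_exists.2 hgrow)]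
  congr 1
  funext k
  rw [show 2 * k + 2 = 2 * (k + 1) by ring, (hrun (k + 1) _ rfl).2.2]
  simp [List.getD_eq_getElem?_getD]

theorem playBranch_followStrat (hn : J.nodes = JF.filtNodesT σ x)
    (he : J.edges = JF.filtEdgesT σ x) {b : Branch F} (hb : J.IsBranchFrom x b) :
    JF.playBranch σ.toGen (followStrat JF b.get?) (.inl x) = b := by
  cases b with
  | fin l => exact playBranch_followStrat_fin hn he hb
  | inf s => exact playBranch_followStrat_inf he hb

end Branches

theorem stmt5_general {F : Type} (JF : JFrame F) (B : Branch F → F) (I : Interp JF)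
    (σ : PosStrat JF.game JF.game.T) (x : F)
    (J : GraphJust JF) (hn : J.nodes = JF.filtNodesT σ x)
    (he : J.edges = JF.filtEdgesT σ x) :
    J.val B x I = ⨅ τ : GenStrat JF.game JF.game.Tᶜ, JF.uS B I (Sum.inl x) σ.toGen τ := by
  apply le_antisymm
  · exact le_iInf fun τ => iInf₂_le _ (isBranchFrom_playBranch hn he τ)
  · refine le_iInf₂ fun b hb => (iInf_le _ (followStrat JF b.get?)).trans_eq ?_
    rw [JFrame.uS, playBranch_followStrat hn he hb]

theorem stmt5 {F : Type} (JF : JFrame F) (B : Branch F → F) (I : Interp JF)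
    (σ : PosStrat JF.game JF.game.T) (x : F) (hx : x ∈ JF.defined)
    (J : GraphJust JF) (hn : J.nodes = JF.filtNodesT σ x)
    (he : J.edges = JF.filtEdgesT σ x) :
    J.val B x I = ⨅ τ : GenStrat JF.game JF.game.Tᶜ, JF.uS B I (Sum.inl x) σ.toGen τ :=
  stmt5_general JF B I σ x J hn he

end JT
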